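/- arXiv:1406.0886 — 2 statements merged into one kernel-verified Lean document; each statement's English description precedes it below -/
import Mathlib

section
/- Let K be a field of characteristic zero and let C = x + C_{-1}x^{-1} + C_{-2}x^{-2} + ⋯ ∈ K[y]((x^{-1})) with C_{-k} ∈ K[y]. If deg_y(C_{-k}) ≤ k+1 for k = 1, 2, …, m+n−2 and all coefficients (C^n)_{-k} for k = 1, …, m−1 as well as the recursively determined coefficients C_{-k} for k > m+n−2 are defined by the vanishing of (C^n)_{-k} for all k ≥ 1, then deg_y(C_{-k}) ≤ k+1 for all k ≥ 1. -/
/-!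
Give `x = t⁻¹` and `y` weight one each. Then `deg_y C₋ₖ ≤ k + 1` for all `k` says that `C` has
total degree at most one, and total degree is submultiplicative. If `T` is `C` truncated just
before `C₋ₖ`, then `Cⁿ - Tⁿ = (C - T) ∑ Cⁱ Tⁿ⁻¹⁻ⁱ` and the sum starts with `n xⁿ⁻¹`, so the
coefficient of `xⁿ⁻¹⁻ᵏ` in `Cⁿ - Tⁿ` is `n C₋ₖ`. For `k ≥ m + n - 1` that coefficient of `Cⁿ`
vanishes, so `n C₋ₖ` is minus the coefficient of `xⁿ⁻¹⁻ᵏ` in `Tⁿ`, which by induction has total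
degree at most `n`.
-/

open Polynomial HahnSeries Finset

namespace HahnSeries

variable {Γ R : Type*} [AddCommMonoid Γ] [LinearOrder Γ] [IsOrderedCancelAddMonoid Γ]

theorem coeff_mul_of_le_orderTop [NonUnitalNonAssocSemiring R] {x y : R⟦Γ⟧} {a b : Γ}
    (ha : a ≤ x.orderTop) (hb : b ≤ y.orderTop) :
    (x * y).coeff (a + b) = x.coeff a * y.coeff b := by
  rw [coeff_mul, Finset.sum_eq_single (a, b)]
  · rintro ⟨p, q⟩ hpq hne
    obtain ⟨hp, hq, hsum⟩ := mem_antidiagonal.1 hpq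
    have hap : a ≤ p := not_lt.1 fun h => hp (le_orderTop_iff_forall.1 ha p (by exact_mod_cast h))
    have hbq : b ≤ q := not_lt.1 fun h => hq (le_orderTop_iff_forall.1 hb q (by exact_mod_cast h))
    obtain rfl : p = a :=
      le_antisymm (not_lt.1 fun h => (add_lt_add_of_lt_of_le h hbq).ne' hsum) hap
    obtain rfl : q = b := add_left_cancel hsum
    exact absurd rfl hne
  · intro h
    by_cases hxa : x.coeff a = 0
    · rw [hxa, zero_mul]
    by_cases hyb : y.coeff b = 0
    · rw [hyb, mul_zero]
    exact absurd (mem_antidiagonal.2 ⟨hxa, hyb, rfl⟩) h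

theorem nsmul_le_orderTop_pow [Semiring R] {x : R⟦Γ⟧} {a : Γ} (ha : a ≤ x.orderTop) (n : ℕ) :
    (n • a : Γ) ≤ (x ^ n).orderTop := by
  rw [WithTop.coe_nsmul]
  exact (nsmul_le_nsmul_right ha n).trans orderTop_nsmul_le_orderTop_pow

theorem coeff_pow_nsmul_of_le_orderTop [Semiring R] {x : R⟦Γ⟧} {a : Γ} (ha : a ≤ x.orderTop)
    (n : ℕ) : (x ^ n).coeff (n • a) = x.coeff a ^ n := by
  induction n with
  | zero => simp
  | succ n ih =>
    rw [pow_succ, succ_nsmul, coeff_mul_of_le_orderTop (nsmul_le_orderTop_pow ha n) ha, ih,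
      pow_succ]

theorem coeff_pow_sub_truncLT_pow [CommRing R] {x : R⟦Γ⟧} {a k : Γ} (ha : a ≤ x.orderTop)
    (hxa : x.coeff a = 1) (hak : a < k) (n : ℕ) :
    (x ^ n - truncLT k x ^ n).coeff ((n - 1) • a + k) = n * x.coeff k := by
  set t := truncLT k x
  have hta : a ≤ t.orderTop := le_orderTop_iff_forall.2 fun j hj => by
    rw [HahnSeries.coeff_truncLT, le_orderTop_iff_forall.1 ha j hj, ite_self]
  have hta1 : t.coeff a = 1 := by rw [coeff_truncLT_of_lt hak, hxa]
  have hdiff : k ≤ (x - t).orderTop := le_orderTop_iff_forall.2 fun j hj => by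
    rw [coeff_sub, coeff_truncLT_of_lt (by exact_mod_cast hj), sub_self]
  have hterm : ∀ i ∈ range n, ((n - 1) • a : Γ) ≤ (x ^ i * t ^ (n - 1 - i)).orderTop ∧
      (x ^ i * t ^ (n - 1 - i)).coeff ((n - 1) • a) = 1 := by
    intro i hi
    have hsplit : (n - 1) • a = i • a + (n - 1 - i) • a := by
      rw [← add_nsmul, Nat.add_sub_cancel' (by have := mem_range.1 hi; omega)]
    rw [hsplit, WithTop.coe_add, coeff_mul_of_le_orderTop (nsmul_le_orderTop_pow ha i)
      (nsmul_le_orderTop_pow hta _), coeff_pow_nsmul_of_le_orderTop ha,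
      coeff_pow_nsmul_of_le_orderTop hta, hxa, hta1, one_pow, one_pow, one_mul]
    exact ⟨(add_le_add (nsmul_le_orderTop_pow ha i) (nsmul_le_orderTop_pow hta _)).trans
      orderTop_add_le_mul, rfl⟩
  have hS : ((n - 1) • a : Γ) ≤ (∑ i ∈ range n, x ^ i * t ^ (n - 1 - i)).orderTop :=
    le_orderTop_iff_forall.2 fun j hj => by
      rw [coeff_sum]
      exact sum_eq_zero fun i hi => le_orderTop_iff_forall.1 (hterm i hi).1 j hj
  rw [← geom_sum₂_mul, coeff_mul_of_le_orderTop hS hdiff, coeff_sum,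
    sum_congr rfl fun i hi => (hterm i hi).2, coeff_sub, coeff_truncLT_of_le le_rfl]
  simp

end HahnSeries

section TotalDegree

variable {R : Type*}

/-- With `t = x⁻¹`, the monomial `yʲ tⁱ` has total degree `j - i` in `x` and `y`. -/
def TotalDegreeLE [Semiring R] (X : LaurentSeries R[X]) (a : ℤ) : Prop :=
  ∀ i : ℤ, ∀ j : ℕ, a < j - i → (X.coeff i).coeff j = 0

theorem totalDegreeLE_one [Semiring R] : TotalDegreeLE (1 : LaurentSeries R[X]) 0 := by
  intro i j hij
  rw [HahnSeries.coeff_one]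
  split_ifs with hi
  · rw [Polynomial.coeff_one, if_neg (by omega)]
  · exact Polynomial.coeff_zero j

theorem TotalDegreeLE.mul [Semiring R] {X Y : LaurentSeries R[X]} {a b : ℤ}
    (hX : TotalDegreeLE X a) (hY : TotalDegreeLE Y b) : TotalDegreeLE (X * Y) (a + b) := by
  intro i j hij
  rw [HahnSeries.coeff_mul, Polynomial.finsetSum_coeff]
  refine sum_eq_zero fun pq hpq => ?_
  have hpq := (mem_antidiagonal.1 hpq).2.2
  rw [Polynomial.coeff_mul]
  refine sum_eq_zero fun uv huv => ?_
  have huv := mem_antidiagonal.1 huv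
  by_cases hu : a < uv.1 - pq.1
  · rw [hX _ _ hu, zero_mul]
  · rw [hY _ _ (by omega), mul_zero]

theorem TotalDegreeLE.pow [Semiring R] {X : LaurentSeries R[X]} {a : ℤ} (hX : TotalDegreeLE X a)
    (n : ℕ) : TotalDegreeLE (X ^ n) (n * a) := by
  induction n with
  | zero => simpa using totalDegreeLE_one
  | succ n ih =>
    rw [pow_succ]
    convert ih.mul hX using 1
    push_cast
    ring

theorem totalDegreeLE_truncLT [Semiring R] {X : LaurentSeries R[X]} {a k : ℤ}
    (h : ∀ i < k, ∀ j : ℕ, a < j - i → (X.coeff i).coeff j = 0) :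
    TotalDegreeLE (truncLT k X) a := by
  intro i j hij
  rw [HahnSeries.coeff_truncLT]
  split_ifs with hi
  · exact h i hi j hij
  · exact Polynomial.coeff_zero j

theorem coeff_coeff_eq_zero_of_coeff_pow_eq_zero [CommRing R] [NoZeroDivisors R]
    {X : LaurentSeries R[X]} (hX : ((-1 : ℤ) : WithTop ℤ) ≤ X.orderTop) (hX1 : X.coeff (-1) = 1)
    {n : ℕ} (hn : (n : R) ≠ 0) {k : ℤ} (hk : 0 ≤ k) (hT : TotalDegreeLE (truncLT k X) 1)
    (hvan : (X ^ n).coeff (k + 1 - n) = 0) {j : ℕ} (hj : 1 < j - k) :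
    (X.coeff k).coeff j = 0 := by
  have hn1 : 1 ≤ n := Nat.one_le_iff_ne_zero.2 fun h => hn (by rw [h, Nat.cast_zero])
  have hgeom := congrArg (Polynomial.coeff · j)
    (coeff_pow_sub_truncLT_pow hX hX1 (by omega : (-1 : ℤ) < k) n)
  rw [show (n - 1) • (-1 : ℤ) + k = k + 1 - n by simp; omega, HahnSeries.coeff_sub, hvan, zero_sub] at hgeom
  simp only [Polynomial.coeff_neg, coeff_natCast_mul] at hgeom
  rw [hT.pow n _ _ (by omega), neg_zero] at hgeom
  exact (mul_eq_zero.1 hgeom.symm).resolve_left hn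

end TotalDegree

/-- Let `C = x + C₋₁x⁻¹ + C₋₂x⁻² + ⋯ ∈ K[y]((x⁻¹))` with
`C₋ₖ ∈ K[y]`, satisfying `(C^n)_{-k} = 0` for all `k ≥ 1` (which recursively
determines `C₋ₖ` for `k > m+n−2`).  If `deg_y C₋ₖ ≤ k+1` for
`k = 1, …, m+n−2`, then `deg_y C₋ₖ ≤ k+1` for all `k ≥ 1`.
Here `C₋ₖ = C.coeff k` in the `t = x⁻¹` Hahn-series picture. -/
theorem statement13 (K : Type*) [Field K] [CharZero K] (n m : ℕ)
    (hn : 1 ≤ n) (hm : 1 ≤ m)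
    (C : LaurentSeries (Polynomial K))
    (hC1 : C.coeff (-1) = 1) (hC0 : C.coeff 0 = 0)
    (hC2 : ∀ j : ℤ, j < -1 → C.coeff j = 0)
    (hvan : ∀ k : ℤ, 1 ≤ k → (C ^ n).coeff k = 0)
    (hdeg : ∀ k : ℕ, 1 ≤ k → k ≤ m + n - 2 → (C.coeff (k : ℤ)).degree ≤ ((k + 1 : ℕ) : WithBot ℕ)) :
    ∀ k : ℕ, 1 ≤ k → (C.coeff (k : ℤ)).degree ≤ ((k + 1 : ℕ) : WithBot ℕ) := by
  have hCtop : ((-1 : ℤ) : WithTop ℤ) ≤ C.orderTop :=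
    le_orderTop_iff_forall.2 fun j hj => hC2 j (WithTop.coe_lt_coe.1 hj)
  have hnK : (n : K) ≠ 0 := Nat.cast_ne_zero.2 (by omega)
  have htrunc : ∀ k : ℕ, TotalDegreeLE (truncLT (k : ℤ) C) 1 := by
    intro k
    induction k using Nat.strong_induction_on with
    | _ k ih =>
    refine totalDegreeLE_truncLT fun i hik j hj => ?_
    obtain hi | rfl | rfl | ⟨r, rfl, hr⟩ :
        i < -1 ∨ i = -1 ∨ i = 0 ∨ ∃ r : ℕ, i = r ∧ 1 ≤ r := by
      by_cases hi : 1 ≤ i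
      · exact Or.inr (Or.inr (Or.inr ⟨i.toNat, by omega, by omega⟩))
      · omega
    · rw [hC2 i hi, Polynomial.coeff_zero]
    · rw [hC1, Polynomial.coeff_one, if_neg (by omega)]
    · rw [hC0, Polynomial.coeff_zero]
    · by_cases hr' : r ≤ m + n - 2
      · exact (degree_le_iff_coeff_zero _ _).1 (hdeg r hr hr') j (by exact_mod_cast (by omega))
      · exact coeff_coeff_eq_zero_of_coeff_pow_eq_zero hCtop hC1 hnK (by omega)
          (ih r (by omega)) (hvan _ (by omega)) hj
  intro k _
  rw [degree_le_iff_coeff_zero]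
  intro j hj
  have hk : (k : ℤ) < (k + 1 : ℕ) := by omega
  rw [← coeff_truncLT_of_lt hk]
  have hkj : k + 1 < j := by exact_mod_cast hj
  exact htrunc (k + 1) k j (by omega)
end

section
/- Let K be a field of characteristic zero, n, m ≥ 1, λ̃ ∈ K^×, and let p, q ∈ K[x] be monic with deg p = n, deg q = m satisfying m p' q − n p q' = λ̃. Then (p^m/q^n)' = λ̃ p^{m-1}/q^{n+1} in K((x^{-1})), and there exists r ∈ K((x^{-1})) with deg(r) = 1−m−n and leading coefficient λ̃/(1−m−n) such that p^m/q^n = 1 + r. -/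
open Polynomial HahnSeries Finset

noncomputable section

/-- The support of a Laurent series (in `x⁻¹`) is bounded below. -/
theorem LaurentSeries.bddBelow_support {R : Type*} [CommRing R] (f : LaurentSeries R) :
    BddBelow (Function.support f.coeff) := by
  rcases (Function.support f.coeff).eq_empty_or_nonempty with h | h
  · simp [h]
  · exact ⟨f.isWF_support.min h, fun x hx => f.isWF_support.min_le h hx⟩

/-- Build a Laurent series from a coefficient function with support bounded below. -/
theorem isPWO_of_bddBelow {s : Set ℤ} (h : BddBelow s) : s.IsPWO :=
  Set.IsWF.isPWO h.wellFoundedOn_lt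

/-- Formal derivative with respect to `x` on `K[y]((x⁻¹))`, where the Hahn series
variable `t` corresponds to `x⁻¹`, so the coefficient of `x^k` is `f.coeff (-k)`. -/
def lsDx {R : Type*} [CommRing R] (f : LaurentSeries R) : LaurentSeries R where
  coeff j := (1 - j) • f.coeff (j - 1)
  isPWO_support' := by
    obtain ⟨b, hb⟩ := LaurentSeries.bddBelow_support f
    refine isPWO_of_bddBelow ⟨b + 1, ?_⟩
    intro j hj
    have h1 : f.coeff (j - 1) ≠ 0 := by
      intro h; apply hj; simp [Function.mem_support, h]
    have := hb h1
    omega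

/-- Coefficientwise derivative with respect to `y` on `K[y]((x⁻¹))`. -/
def lsDy {K : Type*} [CommRing K] (f : LaurentSeries (Polynomial K)) :
    LaurentSeries (Polynomial K) where
  coeff j := Polynomial.derivative (f.coeff j)
  isPWO_support' := by
    refine f.isPWO_support.mono ?_
    intro j hj
    simp only [Function.mem_support, HahnSeries.mem_support] at *
    exact fun h => hj (by rw [h]; simp)

/-- The Jacobian `∂ₓP ∂_y F − ∂_y P ∂ₓ F` on `K[y]((x⁻¹))`. -/
def lsJac {K : Type*} [CommRing K] (P F : LaurentSeries (Polynomial K)) :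
    LaurentSeries (Polynomial K) :=
  lsDx P * lsDy F - lsDy P * lsDx F

/-- The embedding `K[x] → K((x⁻¹))`, with Hahn series variable `t = x⁻¹`. -/
def embX (K : Type*) [Field K] : Polynomial K →ₐ[K] LaurentSeries K :=
  Polynomial.aeval (HahnSeries.single (-1 : ℤ) (1 : K))

/-!
`lsDx` is a derivation of `K((x⁻¹))` restricting to `d/dx` on `K[x]`, so the quotient rule
together with the Wronskian identity `W(qⁿ, pᵐ) = pᵐ⁻¹ qⁿ⁻¹ (m p' q − n p q')` gives
`(pᵐ/qⁿ)' = λ̃ pᵐ⁻¹/qⁿ⁺¹`. As `pᵐ` and `qⁿ` are monic of the same degree `mn`, `pᵐ/qⁿ = 1 + r`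
with `r` of negative degree, while its derivative has degree `−(m+n)` and leading coefficient
`λ̃`. Since differentiation multiplies the coefficient of `xᵏ` by `k` (and shifts it to `xᵏ⁻¹`),
which is invertible for `k ≠ 0`, `r` has degree `1 − m − n` and leading coefficient
`λ̃/(1 − m − n)`.
-/

section Derivative

variable {R : Type*} [CommRing R]

lemma algebraMap_laurentSeries_apply (c : R) :
    algebraMap R (LaurentSeries R) c = HahnSeries.C c := by
  rw [algebraMap_apply', ← ofPowerSeries_C]
  rfl

@[simp] lemma lsDx_coeff (f : LaurentSeries R) (j : ℤ) :
    (lsDx f).coeff j = (1 - j) • f.coeff (j - 1) := rfl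

lemma lsDx_coeff_add_one (f : LaurentSeries R) (j : ℤ) :
    (lsDx f).coeff (j + 1) = (-j) • f.coeff j := by
  rw [lsDx_coeff, add_sub_cancel_right, sub_add_cancel_right]

/-- The Euler operator `x d/dx`. Being diagonal on coefficients it is visibly a derivation, and
`lsDx = x⁻¹ · lsEuler`. -/
def lsEuler (f : LaurentSeries R) : LaurentSeries R where
  coeff j := (-j) • f.coeff j
  isPWO_support' := f.isPWO_support.mono fun j hj h => hj (by simp only [h, smul_zero])

@[simp] lemma lsEuler_coeff (f : LaurentSeries R) (j : ℤ) :
    (lsEuler f).coeff j = (-j) • f.coeff j := rfl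

lemma support_lsEuler_subset (f : LaurentSeries R) : (lsEuler f).support ⊆ f.support :=
  fun j hj h => hj (by rw [lsEuler_coeff, h, smul_zero])

lemma lsEuler_mul (f g : LaurentSeries R) :
    lsEuler (f * g) = lsEuler f * g + f * lsEuler g := by
  ext j
  rw [HahnSeries.coeff_add, lsEuler_coeff, HahnSeries.coeff_mul,
    coeff_mul_left' f.isPWO_support (support_lsEuler_subset f),
    coeff_mul_right' g.isPWO_support (support_lsEuler_subset g), smul_sum, ← sum_add_distrib]
  refine sum_congr rfl fun ij hij => ?_
  rw [lsEuler_coeff, lsEuler_coeff, ← (mem_antidiagonal.1 hij).2.2, neg_add, add_smul,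
    smul_mul_assoc, mul_smul_comm]

lemma lsDx_eq_single_mul_lsEuler (f : LaurentSeries R) :
    lsDx f = single (1 : ℤ) (1 : R) * lsEuler f := by
  ext j
  obtain ⟨i, rfl⟩ : ∃ i, j = i + 1 := ⟨j - 1, by ring⟩
  rw [lsDx_coeff_add_one, coeff_single_mul_add, one_mul, lsEuler_coeff]

lemma lsDx_mul (f g : LaurentSeries R) : lsDx (f * g) = lsDx f * g + f * lsDx g := by
  simp only [lsDx_eq_single_mul_lsEuler, lsEuler_mul]
  ring

lemma lsDx_one : lsDx (1 : LaurentSeries R) = 0 := by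
  ext j
  obtain ⟨i, rfl⟩ : ∃ i, j = i + 1 := ⟨j - 1, by ring⟩
  rw [lsDx_coeff_add_one, HahnSeries.coeff_one, HahnSeries.coeff_zero]
  split_ifs with h <;> simp [h]

variable (R) in
def lsDxDerivation : Derivation R (LaurentSeries R) (LaurentSeries R) where
  toFun := lsDx
  map_add' f g := by ext j; simp only [lsDx_coeff, HahnSeries.coeff_add, smul_add]
  map_smul' c f := by
    rw [RingHom.id_apply, Algebra.smul_def, algebraMap_laurentSeries_apply, C_mul_eq_smul]
    ext j
    simp only [lsDx_coeff, HahnSeries.coeff_smul, smul_eq_mul, mul_smul_comm]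
  map_one_eq_zero' := lsDx_one
  leibniz' f g := by
    change lsDx (f * g) = f * lsDx g + g * lsDx f
    rw [lsDx_mul]; ring

@[simp] lemma lsDxDerivation_apply (f : LaurentSeries R) : lsDxDerivation R f = lsDx f := rfl

lemma coeff_sub_one_of_ne_zero (f : LaurentSeries R) {j : ℤ} (hj : j ≠ 0) :
    (f - 1).coeff j = f.coeff j := by
  rw [HahnSeries.coeff_sub, HahnSeries.coeff_one, if_neg hj, sub_zero]

end Derivative

section Embedding

variable {K : Type*} [Field K]

lemma embX_C (c : K) : embX K (Polynomial.C c) = HahnSeries.C c := by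
  rw [embX, aeval_C, algebraMap_laurentSeries_apply]

lemma embX_eq_sum (p : K[X]) :
    embX K p = p.sum fun i a => single (-(i : ℤ)) a := by
  rw [embX, aeval_def, eval₂_eq_sum]
  refine sum_congr rfl fun i _ => ?_
  dsimp only
  rw [single_pow, one_pow, nsmul_eq_mul, mul_neg_one, algebraMap_laurentSeries_apply,
    C_apply, single_mul_single, zero_add, mul_one]

lemma coeff_embX (p : K[X]) (j : ℤ) :
    (embX K p).coeff j = ∑ i ∈ p.support, if j = -(i : ℤ) then p.coeff i else 0 := by
  rw [embX_eq_sum, Polynomial.sum, HahnSeries.coeff_sum]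
  exact sum_congr rfl fun _ _ => by convert coeff_single

lemma coeff_embX_neg (p : K[X]) (k : ℕ) : (embX K p).coeff (-(k : ℤ)) = p.coeff k := by
  simp only [coeff_embX, neg_inj, Nat.cast_inj, sum_ite_eq]
  split_ifs with h
  · rfl
  · exact (notMem_support_iff.1 h).symm

lemma coeff_embX_of_pos (p : K[X]) {j : ℤ} (hj : 0 < j) : (embX K p).coeff j = 0 := by
  rw [coeff_embX]
  exact sum_eq_zero fun i _ => if_neg (by omega)

lemma coeff_embX_of_lt (p : K[X]) {j : ℤ} (hj : j < -(p.natDegree : ℤ)) :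
    (embX K p).coeff j = 0 := by
  rw [coeff_embX]
  refine sum_eq_zero fun i hi => if_neg fun h => ?_
  have := le_natDegree_of_mem_supp i hi
  omega

lemma lsDx_embX (p : K[X]) : lsDx (embX K p) = embX K (derivative p) := by
  ext j
  rcases le_or_gt j 0 with hj | hj
  · obtain ⟨k, rfl⟩ : ∃ k : ℕ, j = -(k : ℤ) := ⟨(-j).toNat, by omega⟩
    rw [lsDx_coeff, show -(k : ℤ) - 1 = -((k + 1 : ℕ) : ℤ) by push_cast; ring,
      coeff_embX_neg, coeff_embX_neg, coeff_derivative, zsmul_eq_mul]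
    push_cast
    ring
  · obtain ⟨i, rfl⟩ : ∃ i, j = i + 1 := ⟨j - 1, by ring⟩
    rcases eq_or_lt_of_le (show 0 ≤ i by omega) with rfl | hi
    · rw [lsDx_coeff_add_one, neg_zero, zero_smul, coeff_embX_of_pos _ hj]
    · rw [lsDx_coeff_add_one, coeff_embX_of_pos _ hi, coeff_embX_of_pos _ hj, smul_zero]

lemma lsDx_embX_div (u v : K[X]) :
    lsDx (embX K u / embX K v) = embX K (wronskian v u) / embX K v ^ 2 := by
  rw [← lsDxDerivation_apply, Derivation.leibniz_div]
  simp only [lsDxDerivation_apply, lsDx_embX, wronskian, map_sub, map_mul, smul_eq_mul]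
  ring

lemma embX_ne_zero {p : K[X]} (hp : p ≠ 0) : embX K p ≠ 0 := by
  intro h
  have h0 := coeff_embX_neg p p.natDegree
  rw [h, HahnSeries.coeff_zero, coeff_natDegree] at h0
  exact hp (Polynomial.leadingCoeff_eq_zero.1 h0.symm)

lemma order_embX {p : K[X]} (hp : p ≠ 0) : (embX K p).order = -(p.natDegree : ℤ) := by
  refine le_antisymm (order_le_of_coeff_ne_zero ?_) (le_of_not_gt fun h => ?_)
  · rwa [coeff_embX_neg, coeff_natDegree, Polynomial.leadingCoeff_ne_zero]
  · exact embX_ne_zero hp (coeff_order_eq_zero.1 (coeff_embX_of_lt p h))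

lemma leadingCoeff_embX (p : K[X]) : (embX K p).leadingCoeff = p.leadingCoeff := by
  rcases eq_or_ne p 0 with rfl | hp
  · simp
  · rw [HahnSeries.leadingCoeff_eq, order_embX hp, coeff_embX_neg, coeff_natDegree]

end Embedding

lemma wronskian_pow_pow {R : Type*} [CommRing R] (p q : R[X]) {m n : ℕ} (hm : 1 ≤ m)
    (hn : 1 ≤ n) : wronskian (q ^ n) (p ^ m) =
      p ^ (m - 1) * q ^ (n - 1) * (m * derivative p * q - n * p * derivative q) := by
  obtain ⟨m, rfl⟩ := Nat.exists_eq_add_of_le' hm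
  obtain ⟨n, rfl⟩ := Nat.exists_eq_add_of_le' hn
  simp only [wronskian, derivative_pow, Nat.add_sub_cancel, C_eq_natCast]
  ring

section Division

variable {Γ K : Type*} [AddCommGroup Γ] [LinearOrder Γ] [IsOrderedAddMonoid Γ] [Field K]

lemma HahnSeries.order_div {x y : HahnSeries Γ K} (hx : x ≠ 0) (hy : y ≠ 0) :
    (x / y).order = x.order - y.order := by
  rw [eq_sub_iff_add_eq, ← order_mul (div_ne_zero hx hy) hy, div_mul_cancel₀ x hy]

lemma HahnSeries.leadingCoeff_div (x y : HahnSeries Γ K) :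
    (x / y).leadingCoeff = x.leadingCoeff / y.leadingCoeff := by
  rcases eq_or_ne y 0 with rfl | hy
  · simp
  · rw [eq_div_iff (leadingCoeff_ne_zero.2 hy), ← leadingCoeff_mul, div_mul_cancel₀ x hy]

end Division

section RationalFunction

variable {K : Type*} [Field K]

lemma order_embX_div {u v : K[X]} (hu : u ≠ 0) (hv : v ≠ 0) :
    (embX K u / embX K v).order = v.natDegree - u.natDegree := by
  rw [HahnSeries.order_div (embX_ne_zero hu) (embX_ne_zero hv), order_embX hu, order_embX hv]
  ring

lemma leadingCoeff_embX_div (u v : K[X]) :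
    (embX K u / embX K v).leadingCoeff = u.leadingCoeff / v.leadingCoeff := by
  rw [HahnSeries.leadingCoeff_div, leadingCoeff_embX, leadingCoeff_embX]

lemma lsDx_embX_pow_div_pow {p q : K[X]} (hq : q ≠ 0) {m n : ℕ} (hm : 1 ≤ m) (hn : 1 ≤ n) {c : K}
    (h : (m : K[X]) * derivative p * q - n * p * derivative q = Polynomial.C c) :
    lsDx (embX K p ^ m / embX K q ^ n) =
      embX K (Polynomial.C c * p ^ (m - 1)) / embX K (q ^ (n + 1)) := by
  rw [← map_pow, ← map_pow, lsDx_embX_div, wronskian_pow_pow p q hm hn, h]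
  obtain ⟨n, rfl⟩ := Nat.exists_eq_add_of_le' hn
  rw [div_eq_div_iff (pow_ne_zero 2 (embX_ne_zero (pow_ne_zero _ hq)))
    (embX_ne_zero (pow_ne_zero _ hq))]
  simp only [map_mul, map_pow, Nat.add_sub_cancel]
  ring

end RationalFunction

section CharZero

variable {K : Type*} [Field K] [CharZero K]

lemma coeff_eq_lsDx_coeff_add_one_div (f : LaurentSeries K) {j : ℤ} (hj : j ≠ 0) :
    f.coeff j = (lsDx f).coeff (j + 1) / ((-j : ℤ) : K) := by
  rw [lsDx_coeff_add_one, zsmul_eq_mul,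
    mul_div_cancel_left₀ _ (Int.cast_ne_zero.2 (neg_ne_zero.2 hj))]

lemma coeff_sub_one_eq_zero_of_lt {F : LaurentSeries K} (hF : F.order = 0)
    (hF1 : F.leadingCoeff = 1) {j : ℤ} (hj : j + 1 < (lsDx F).order) : (F - 1).coeff j = 0 := by
  rcases lt_trichotomy j 0 with hneg | rfl | hpos
  · rw [coeff_sub_one_of_ne_zero F hneg.ne]
    exact coeff_eq_zero_of_lt_order (hF ▸ hneg)
  · rw [HahnSeries.coeff_sub, HahnSeries.coeff_one, if_pos rfl, ← hF, ← leadingCoeff_eq, hF1,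
      sub_self]
  · rw [coeff_sub_one_of_ne_zero F hpos.ne', coeff_eq_lsDx_coeff_add_one_div F hpos.ne',
      coeff_eq_zero_of_lt_order hj, zero_div]

end CharZero

/-- Let `n, m ≥ 1`, `λ̃ ∈ K^×`, and `p, q ∈ K[x]` monic of degrees
`n, m` with `m p' q − n p q' = λ̃`.  Then in `K((x⁻¹))` one has
`(p^m/q^n)' = λ̃ p^{m-1}/q^{n+1}` and `p^m/q^n = 1 + r` for some `r` with
`deg r = 1−m−n` and leading coefficient `λ̃/(1−m−n)`, i.e. `r.coeff (m+n−1) = λ̃/(1−m−n)`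
and `r.coeff j = 0` for `j < m+n−1` (coefficient of `x^k` at Hahn index `-k`). -/
theorem statement14 (K : Type*) [Field K] [CharZero K] (n m : ℕ)
    (hn : 1 ≤ n) (hm : 1 ≤ m) (p q : Polynomial K)
    (hp : p.Monic) (hq : q.Monic) (hpn : p.natDegree = n) (hqm : q.natDegree = m)
    (lamt : K) (hlamt : lamt ≠ 0)
    (heq : (m : Polynomial K) * p.derivative * q - (n : Polynomial K) * p * q.derivative =
      Polynomial.C lamt) :
    lsDx (embX K p ^ m / embX K q ^ n) =
      HahnSeries.single 0 lamt * embX K p ^ (m - 1) / embX K q ^ (n + 1) ∧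
    ∃ r : LaurentSeries K,
      embX K p ^ m / embX K q ^ n = 1 + r ∧
      r.coeff ((m : ℤ) + n - 1) = lamt / (1 - (m : K) - (n : K)) ∧
      r.coeff ((m : ℤ) + n - 1) ≠ 0 ∧
      ∀ j : ℤ, j < (m : ℤ) + n - 1 → r.coeff j = 0 := by
  have hH := lsDx_embX_pow_div_pow hq.ne_zero hm hn heq
  set F := embX K p ^ m / embX K q ^ n with hF
  have hFord : F.order = 0 := by
    rw [hF, ← map_pow, ← map_pow,
      order_embX_div (pow_ne_zero _ hp.ne_zero) (pow_ne_zero _ hq.ne_zero), natDegree_pow,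
      natDegree_pow, hpn, hqm, mul_comm, sub_self]
  have hFlc : F.leadingCoeff = 1 := by
    rw [hF, ← map_pow, ← map_pow, leadingCoeff_embX_div, (hp.pow m).leadingCoeff,
      (hq.pow n).leadingCoeff, div_one]
  have hHord : (lsDx F).order = m + n := by
    rw [hH, order_embX_div (mul_ne_zero (C_ne_zero.2 hlamt) (pow_ne_zero _ hp.ne_zero))
      (pow_ne_zero _ hq.ne_zero), natDegree_C_mul hlamt, natDegree_pow, natDegree_pow, hpn, hqm]
    push_cast [hm]
    ring
  have hHlc : (lsDx F).leadingCoeff = lamt := by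
    rw [hH, leadingCoeff_embX_div, leadingCoeff_mul_monic (hp.pow _), leadingCoeff_C,
      (hq.pow _).leadingCoeff, div_one]
  have htop : (F - 1).coeff (m + n - 1) = lamt / (1 - m - n) := by
    rw [coeff_sub_one_of_ne_zero F (by omega), coeff_eq_lsDx_coeff_add_one_div F (by omega),
      sub_add_cancel, ← hHord, ← leadingCoeff_eq, hHlc, hHord]
    push_cast
    ring
  refine ⟨by rw [hH, map_mul, embX_C, C_apply, map_pow, map_pow], F - 1, by ring, htop, ?_,
    fun j hj => coeff_sub_one_eq_zero_of_lt hFord hFlc (by rw [hHord]; omega)⟩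
  rw [htop]
  exact div_ne_zero hlamt (by exact_mod_cast (show (1 : ℤ) - m - n ≠ 0 by omega))

end
end
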